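/- Let u: R → U be a flat injective ring epimorphism of commutative rings with associated Gabriel topology G. Then for every J ∈ G, the natural map R/J → End_R(U/R)/J·End_R(U/R) is an isomorphism of R-modules. -/
import Mathlib


universe u

set_option maxHeartbeats 1000000

/-- for a flat injective ring epimorphism `u : R → U` of commutative rings
with associated Gabriel topology `𝒢`, for every `J ∈ 𝒢` the natural map
`R/J → End_R(U/R) / J·End_R(U/R)` (induced by `r ↦ (multiplication by r)`) is an
isomorphism of `R`-modules. -/
theorem stmt16 {R : Type u} [CommRing R] {U : Type u} [CommRing U] [Algebra R U]
    [Module.Flat R U]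
    (hinj : Function.Injective (algebraMap R U))
    (hepi : Function.Bijective (LinearMap.mul' R U))
    (J : Ideal R) (hJ : J • (⊤ : Submodule R U) = ⊤) :
    ∃ e : (R ⧸ J) ≃ₗ[R]
        ((U ⧸ LinearMap.range (Algebra.linearMap R U)) →ₗ[R]
            (U ⧸ LinearMap.range (Algebra.linearMap R U))) ⧸
          (J • (⊤ : Submodule R
            ((U ⧸ LinearMap.range (Algebra.linearMap R U)) →ₗ[R]
              (U ⧸ LinearMap.range (Algebra.linearMap R U))))),
      ∀ r : R, e (Ideal.Quotient.mk J r) =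
        Submodule.Quotient.mk
          (LinearMap.lsmul R (U ⧸ LinearMap.range (Algebra.linearMap R U)) r) := by
  classical
  set F : Submodule R U := LinearMap.range (Algebra.linearMap R U) with hF
  have hπ : Function.Surjective F.mkQ := Submodule.mkQ_surjective F
  obtain ⟨lift, hlift⟩ : ∃ l : (U ⧸ F) → U, ∀ x, F.mkQ (l x) = x :=
    ⟨Function.surjInv hπ, fun x => Function.surjInv_eq hπ x⟩
  -- a finite representation `1 = ∑ i in a.support, a i • i` with `a i ∈ J`
  have h1 : (1 : U) ∈ J • Submodule.span R (Set.range (id : U → U)) := by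
    rw [Set.range_id, Submodule.span_univ, hJ]; exact Submodule.mem_top
  obtain ⟨a, haJ, hasum⟩ := (Submodule.mem_ideal_smul_span_iff_exists_sum J id 1).mp h1
  rw [Finsupp.sum] at hasum
  simp only [id] at hasum
  have hπ1 : F.mkQ (1 : U) = 0 := by
    rw [Submodule.mkQ_apply, Submodule.Quotient.mk_eq_zero]
    exact ⟨1, by simp⟩
  -- for every `f`, the canonical element `∑ aᵢ • lift (f (π uᵢ))` lies in the image of `R`
  have hwF : ∀ f : (U ⧸ F) →ₗ[R] (U ⧸ F),
      ∃ s : R, algebraMap R U s = ∑ i ∈ a.support, a i • lift (f (F.mkQ i)) := by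
    intro f
    have h0 : F.mkQ (∑ i ∈ a.support, a i • lift (f (F.mkQ i))) = 0 := by
      calc F.mkQ (∑ i ∈ a.support, a i • lift (f (F.mkQ i)))
          = ∑ i ∈ a.support, a i • f (F.mkQ i) := by
            rw [map_sum]
            exact Finset.sum_congr rfl fun i _ => by rw [map_smul, hlift]
        _ = f (F.mkQ (∑ i ∈ a.support, a i • i)) := by
            rw [map_sum, map_sum]
            exact Finset.sum_congr rfl fun i _ => by rw [map_smul, map_smul]
        _ = 0 := by rw [hasum, hπ1, map_zero]
    rw [Submodule.mkQ_apply, Submodule.Quotient.mk_eq_zero] at h0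
    obtain ⟨s, hs⟩ := h0
    exact ⟨s, hs⟩
  choose sfun hsfun using hwF
  -- well-definedness: for any choice of lifts `v i` of `f (π i)`,
  -- `algebraMap (sfun f) = ∑ aᵢ • v i + algebraMap j` for some `j ∈ J`.
  have hWD : ∀ (f : (U ⧸ F) →ₗ[R] (U ⧸ F)) (v : U → U),
      (∀ i, F.mkQ (v i) = f (F.mkQ i)) →
      ∃ j ∈ J, algebraMap R U (sfun f)
        = (∑ i ∈ a.support, a i • v i) + algebraMap R U j := by
    intro f v hv
    have hd : ∀ i : U, ∃ ρ : R, algebraMap R U ρ = lift (f (F.mkQ i)) - v i := by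
      intro i
      have hm : lift (f (F.mkQ i)) - v i ∈ F := by
        rw [← Submodule.Quotient.mk_eq_zero, ← Submodule.mkQ_apply, map_sub, hlift, hv,
          sub_self]
      obtain ⟨ρ, hρ⟩ := hm
      exact ⟨ρ, hρ⟩
    choose ρ hρ using hd
    refine ⟨∑ i ∈ a.support, a i * ρ i,
      Submodule.sum_mem _ fun i _ => J.mul_mem_right _ (haJ i), ?_⟩
    rw [hsfun, map_sum, ← Finset.sum_add_distrib]
    refine Finset.sum_congr rfl fun i _ => ?_
    have h2 : algebraMap R U (a i * ρ i) = a i • (lift (f (F.mkQ i)) - v i) := by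
      rw [map_mul, ← Algebra.smul_def, hρ]
    rw [h2, smul_sub]
    ring
  -- membership core: `f ∈ J • ⊤ → sfun f ∈ J`
  have hmem : ∀ f : (U ⧸ F) →ₗ[R] (U ⧸ F),
      f ∈ J • (⊤ : Submodule R ((U ⧸ F) →ₗ[R] (U ⧸ F))) → sfun f ∈ J := by
    intro f hf
    refine Submodule.smul_induction_on hf ?_ ?_
    · intro r hr g _
      obtain ⟨j, hjJ, hj⟩ := hWD (r • g) (fun i => r • lift (g (F.mkQ i))) (fun i => by
        rw [map_smul, hlift, LinearMap.smul_apply])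
      have hsum' : (∑ i ∈ a.support, a i • (r • lift (g (F.mkQ i))))
          = r • ∑ i ∈ a.support, a i • lift (g (F.mkQ i)) := by
        rw [Finset.smul_sum]
        exact Finset.sum_congr rfl fun i _ => smul_comm _ _ _
      rw [hsum', ← hsfun g] at hj
      have he : algebraMap R U (sfun (r • g)) = algebraMap R U (r * sfun g + j) := by
        rw [hj, map_add, map_mul, ← Algebra.smul_def]
      rw [hinj he]
      exact J.add_mem (J.mul_mem_right _ hr) hjJ
    · intro x y hx hy
      obtain ⟨j, hjJ, hj⟩ := hWD (x + y)
        (fun i => lift (x (F.mkQ i)) + lift (y (F.mkQ i))) (fun i => by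
          rw [map_add, hlift, hlift, LinearMap.add_apply])
      have hsum' : (∑ i ∈ a.support, a i • (lift (x (F.mkQ i)) + lift (y (F.mkQ i))))
          = algebraMap R U (sfun x) + algebraMap R U (sfun y) := by
        rw [hsfun x, hsfun y, ← Finset.sum_add_distrib]
        exact Finset.sum_congr rfl fun i _ => smul_add _ _ _
      rw [hsum'] at hj
      have he : algebraMap R U (sfun (x + y)) = algebraMap R U (sfun x + sfun y + j) := by
        rw [hj, map_add, map_add]
      rw [hinj he]
      exact J.add_mem (J.add_mem hx hy) hjJ
  -- injectivity core
  have hinjcore : ∀ r : R,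
      LinearMap.lsmul R (U ⧸ F) r ∈ J • (⊤ : Submodule R ((U ⧸ F) →ₗ[R] (U ⧸ F))) →
      r ∈ J := by
    intro r hr
    have h1' := hmem _ hr
    obtain ⟨j, hjJ, hj⟩ := hWD (LinearMap.lsmul R (U ⧸ F) r) (fun i => r • i) (fun i => by
      rw [map_smul, LinearMap.lsmul_apply])
    have hsum' : (∑ i ∈ a.support, a i • (r • i)) = algebraMap R U r := by
      have : (∑ i ∈ a.support, a i • (r • i)) = r • ∑ i ∈ a.support, a i • i := by
        rw [Finset.smul_sum]
        exact Finset.sum_congr rfl fun i _ => smul_comm _ _ _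
      rw [this, hasum, Algebra.algebraMap_eq_smul_one]
    rw [hsum'] at hj
    have he : algebraMap R U (sfun (LinearMap.lsmul R (U ⧸ F) r))
        = algebraMap R U (r + j) := by rw [hj, map_add]
    have hr' : r = sfun (LinearMap.lsmul R (U ⧸ F) r) - j := by
      have := hinj he
      rw [this]; ring
    rw [hr']
    exact J.sub_mem h1' hjJ
  -- surjectivity core
  have hsurjcore : ∀ f : (U ⧸ F) →ₗ[R] (U ⧸ F),
      f - LinearMap.lsmul R (U ⧸ F) (sfun f)
        ∈ J • (⊤ : Submodule R ((U ⧸ F) →ₗ[R] (U ⧸ F))) := by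
    intro f
    -- the auxiliary endomorphisms h̄ᵢ
    have hle : ∀ i : U, F ≤ LinearMap.ker
        ((f ∘ₗ F.mkQ ∘ₗ LinearMap.mulLeft R i)
          - (F.mkQ ∘ₗ LinearMap.mulLeft R (lift (f (F.mkQ i))))) := by
      intro i x hx
      obtain ⟨r, rfl⟩ := hx
      simp only [LinearMap.mem_ker, LinearMap.sub_apply, LinearMap.comp_apply,
        LinearMap.mulLeft_apply, Algebra.linearMap_apply]
      have e1 : i * algebraMap R U r = r • i := by rw [mul_comm, ← Algebra.smul_def]
      have e2 : lift (f (F.mkQ i)) * algebraMap R U r = r • lift (f (F.mkQ i)) := by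
        rw [mul_comm, ← Algebra.smul_def]
      rw [e1, e2, map_smul, map_smul, map_smul, hlift, sub_self]
    set g : U → ((U ⧸ F) →ₗ[R] (U ⧸ F)) := fun i =>
      F.liftQ _ (hle i) with hg
    have key : f - LinearMap.lsmul R (U ⧸ F) (sfun f) = ∑ i ∈ a.support, a i • g i := by
      apply LinearMap.ext
      intro ξ
      obtain ⟨x, rfl⟩ := hπ ξ
      have happ : ∀ i : U, g i (F.mkQ x)
          = f (F.mkQ (i * x)) - F.mkQ (lift (f (F.mkQ i)) * x) := by
        intro i
        rw [hg]
        rw [Submodule.mkQ_apply, Submodule.liftQ_apply]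
        simp only [LinearMap.sub_apply, LinearMap.comp_apply, LinearMap.mulLeft_apply]
      rw [LinearMap.sum_apply]
      have hterm : ∀ i ∈ a.support, (a i • g i) (F.mkQ x)
          = a i • f (F.mkQ (i * x)) - a i • F.mkQ (lift (f (F.mkQ i)) * x) := by
        intro i _
        rw [LinearMap.smul_apply, happ i, smul_sub]
      rw [Finset.sum_congr rfl hterm, Finset.sum_sub_distrib]
      have hA : (∑ i ∈ a.support, a i • f (F.mkQ (i * x))) = f (F.mkQ x) := by
        have : ∀ i ∈ a.support, a i • f (F.mkQ (i * x)) = f (F.mkQ ((a i • i) * x)) := by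
          intro i _
          rw [smul_mul_assoc, map_smul, map_smul]
        rw [Finset.sum_congr rfl this, ← map_sum, ← map_sum, ← Finset.sum_mul, hasum,
          one_mul]
      have hB : (∑ i ∈ a.support, a i • F.mkQ (lift (f (F.mkQ i)) * x))
          = sfun f • F.mkQ x := by
        have : ∀ i ∈ a.support, a i • F.mkQ (lift (f (F.mkQ i)) * x)
            = F.mkQ ((a i • lift (f (F.mkQ i))) * x) := by
          intro i _
          rw [smul_mul_assoc, map_smul]
        rw [Finset.sum_congr rfl this, ← map_sum, ← Finset.sum_mul, ← hsfun f,
          ← Algebra.smul_def, map_smul]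
      rw [hA, hB]
      simp only [LinearMap.sub_apply, LinearMap.lsmul_apply]
    rw [key]
    exact Submodule.sum_mem _ fun i _ =>
      Submodule.smul_mem_smul (haJ i) Submodule.mem_top
  -- assembly
  set N : Submodule R ((U ⧸ F) →ₗ[R] (U ⧸ F)) := J • ⊤ with hN
  set φ : R →ₗ[R] ((U ⧸ F) →ₗ[R] (U ⧸ F)) ⧸ N :=
    N.mkQ.comp (LinearMap.lsmul R (U ⧸ F)) with hφ
  have hle' : J ≤ LinearMap.ker φ := by
    intro r hr
    have hid : LinearMap.lsmul R (U ⧸ F) r = r • (LinearMap.id : (U ⧸ F) →ₗ[R] (U ⧸ F)) := by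
      ext x; simp
    simp only [hφ, LinearMap.mem_ker, LinearMap.comp_apply, Submodule.mkQ_apply,
      Submodule.Quotient.mk_eq_zero]
    rw [hid, hN]
    exact Submodule.smul_mem_smul hr Submodule.mem_top
  set ebar : (R ⧸ J) →ₗ[R] (((U ⧸ F) →ₗ[R] (U ⧸ F)) ⧸ N) := Submodule.liftQ J φ hle'
    with hebar
  have hker' : LinearMap.ker φ ≤ J := by
    intro r hr
    simp only [hφ, LinearMap.mem_ker, LinearMap.comp_apply, Submodule.mkQ_apply,
      Submodule.Quotient.mk_eq_zero] at hr
    exact hinjcore r hr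
  have hebarinj : Function.Injective ebar :=
    LinearMap.ker_eq_bot.mp (Submodule.ker_liftQ_eq_bot J φ hle' hker')
  have hebarsurj : Function.Surjective ebar := by
    intro y
    obtain ⟨gg, rfl⟩ := N.mkQ_surjective y
    refine ⟨Ideal.Quotient.mk J (sfun gg), ?_⟩
    rw [hebar, ← Ideal.Quotient.mk_eq_mk, Submodule.liftQ_apply, hφ]
    simp only [LinearMap.comp_apply, Submodule.mkQ_apply]
    rw [Submodule.Quotient.eq]
    have := hsurjcore gg
    have h' : LinearMap.lsmul R (U ⧸ F) (sfun gg) - gg ∈ N := by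
      have := N.neg_mem this
      simpa [neg_sub] using this
    exact h'
  refine ⟨LinearEquiv.ofBijective ebar ⟨hebarinj, hebarsurj⟩, fun r => ?_⟩
  show ebar (Ideal.Quotient.mk J r) = _
  rw [hebar, ← Ideal.Quotient.mk_eq_mk, Submodule.liftQ_apply, hφ]
  simp only [LinearMap.comp_apply, Submodule.mkQ_apply]
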